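/- arXiv:1712.06354 — 4 statements merged into one kernel-verified Lean document; each statement's English description precedes it below -/
import Mathlib

section
/- Let (p_i) be a sequence of polynomials over ℝ satisfying p_i(λ) = λ·p_{i-1}(λ) − (1/4)·p_{i-2}(λ) for all i in some range starting at index m+2. Then for all i ≥ 2 in this range, p_{m+i} = (1/2^(i-2))·U_{i-2}·p_{m+2} − (1/2^(i-1))·U_{i-3}·p_{m+1}, where U_j denotes the Chebyshev polynomial of the second kind of degree j (with U_{-1} = 0). -/
open Polynomial

theorem p_eq_chebyshevU_combination (p : ℕ → Polynomial ℝ) (m N : ℕ)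
    (hrec : ∀ i, m + 2 ≤ i → i ≤ N → p i = X * p (i - 1) - C (1 / 4 : ℝ) * p (i - 2)) :
    ∀ i, 2 ≤ i → m + i ≤ N →
      p (m + i) = C ((1 / 2 ^ (i - 2) : ℝ)) * Polynomial.Chebyshev.U ℝ ((i : ℤ) - 2) * p (m + 2)
        - C ((1 / 2 ^ (i - 1) : ℝ)) * Polynomial.Chebyshev.U ℝ ((i : ℤ) - 3) * p (m + 1) := by
  have h2C : (2 : ℝ[X]) = C 2 := (map_ofNat C 2).symm
  intro i
  induction i using Nat.strong_induction_on with
  | _ i IH =>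
    intro h2 hN
    match i, h2 with
    | 2, _ =>
      have e : ((2:ℕ) : ℤ) - 2 = 0 := by norm_num
      have e' : ((2:ℕ) : ℤ) - 3 = -1 := by norm_num
      rw [e, e', Chebyshev.U_zero, Chebyshev.U_neg_one]
      norm_num
    | 3, _ =>
      have h3 : ((3:ℕ) : ℤ) - 2 = 1 := by norm_num
      have h3' : ((3:ℕ) : ℤ) - 3 = 0 := by norm_num
      rw [h3, h3', Chebyshev.U_one, Chebyshev.U_zero]
      rw [hrec (m+3) (by omega) (by omega)]
      have e1 : m + 3 - 1 = m + 2 := by omega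
      have e2 : m + 3 - 2 = m + 1 := by omega
      rw [e1, e2]
      have hc1 : C ((1 / 2 ^ (3-2) : ℝ)) * 2 = 1 := by
        rw [h2C, ← C_mul]; norm_num
      have hc2 : C ((1 / 2 ^ (3-1) : ℝ)) = C ((1/4 : ℝ)) := by norm_num
      linear_combination (-(X * p (m+2))) * hc1 + p (m+1) * hc2
    | (k+4), _ =>
      have hk3 := IH (k+3) (by omega) (by omega) (by omega)
      have hk2 := IH (k+2) (by omega) (by omega) (by omega)
      rw [hrec (m+(k+4)) (by omega) (by omega)]
      have e1 : m + (k+4) - 1 = m + (k+3) := by omega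
      have e2 : m + (k+4) - 2 = m + (k+2) := by omega
      rw [e1, e2, hk3, hk2]
      have n1 : ((k+4:ℕ) : ℤ) - 2 = ((k:ℤ) + 2) := by push_cast; ring
      have n2 : ((k+4:ℕ) : ℤ) - 3 = ((k:ℤ) + 1) := by push_cast; ring
      have n3 : ((k+3:ℕ) : ℤ) - 2 = ((k:ℤ) + 1) := by push_cast; ring
      have n4 : ((k+3:ℕ) : ℤ) - 3 = (k:ℤ) := by push_cast; ring
      have n5 : ((k+2:ℕ) : ℤ) - 2 = (k:ℤ) := by push_cast; ring
      have n6 : ((k+2:ℕ) : ℤ) - 3 = ((k:ℤ) - 1) := by push_cast; ring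
      rw [n1, n2, n3, n4, n5, n6]
      have m1 : k + 4 - 2 = k + 2 := by omega
      have m2 : k + 4 - 1 = k + 3 := by omega
      have m3 : k + 3 - 2 = k + 1 := by omega
      have m4 : k + 3 - 1 = k + 2 := by omega
      have m5 : k + 2 - 2 = k := by omega
      have m6 : k + 2 - 1 = k + 1 := by omega
      rw [m1, m2, m3, m4, m5, m6]
      have hU2 := Chebyshev.U_add_two ℝ (k:ℤ)
      have hU1 := Chebyshev.U_add_two ℝ ((k:ℤ)-1)
      rw [show (k:ℤ)-1+2 = (k:ℤ)+1 by ring, show (k:ℤ)-1+1 = (k:ℤ) by ring] at hU1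
      have c1 : C ((1 / 2 ^ (k+1) : ℝ)) = 2 * C ((1 / 2 ^ (k+2) : ℝ)) := by
        rw [h2C, ← C_mul, C_inj]; field_simp; ring
      have c2 : C ((1 / 2 ^ (k+2) : ℝ)) = 2 * C ((1 / 2 ^ (k+3) : ℝ)) := by
        rw [h2C, ← C_mul, C_inj]; field_simp; ring
      have c3 : C ((1/4 : ℝ)) * C ((1 / 2 ^ k : ℝ)) = C ((1 / 2 ^ (k+2) : ℝ)) := by
        rw [← C_mul, C_inj]; field_simp; ring
      have c4 : C ((1/4 : ℝ)) * C ((1 / 2 ^ (k+1) : ℝ)) = C ((1 / 2 ^ (k+3) : ℝ)) := by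
        rw [← C_mul, C_inj]; field_simp; ring
      linear_combination
        (-(C ((1 / 2 ^ (k+2) : ℝ)) * p (m+2))) * hU2
        + (C ((1 / 2 ^ (k+3) : ℝ)) * p (m+1)) * hU1
        + (X * Chebyshev.U ℝ ((k:ℤ)+1) * p (m+2)) * c1
        - (X * Chebyshev.U ℝ (k:ℤ) * p (m+1)) * c2
        - (Chebyshev.U ℝ (k:ℤ) * p (m+2)) * c3
        + (Chebyshev.U ℝ ((k:ℤ)-1) * p (m+1)) * c4
end

section
/- Fix integers k₁, k₂ ≥ 1 and d ≥ 2, and consider the polynomial Q(z) = z^(2(k₁+k₂)) + ((1−d)/(d+1))·z^(2k₁) + ((1−d)/(d+1))·z^(2k₂) + 1 in ℚ[z]. Q has integer coefficients if and only if (1−d)/(d+1) is an integer (when k₁ ≠ k₂), or (k₁ = k₂ and 2(1−d)/(d+1) is an integer). In particular, if Q is a product of cyclotomic polynomials (hence in ℤ[z] monic), then k₁ = k₂ and d = 3. -/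
/-!
The coefficient of `X ^ (2 k₁)` in `Q` is `c = (1 - d) / (d + 1)`, or `2 c` when `k₁ = k₂`,
and every other coefficient is `0` or `1`. For `d ≥ 2` we have `-1 < c < 0`, so `c` is never
an integer and `2 c ∈ (-2, 0)` is an integer only when `2 c = -1`, i.e. `d = 3`. A product of
cyclotomic polynomials is the image of an integer polynomial, so it has integer coefficients.
-/

open Polynomial

theorem mem_lifts_intCast_iff {R : Type*} [Ring R] (p : R[X]) :
    p ∈ lifts (Int.castRingHom R) ↔ ∀ n, ∃ m : ℤ, p.coeff n = m := by
  simp only [lifts_iff_coeff_lifts, Set.mem_range, eq_intCast, eq_comm]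

theorem cyclotomic_list_prod_mem_lifts {R : Type*} [CommRing R] (L : List ℕ) :
    (L.map fun j => cyclotomic j R).prod ∈ lifts (Int.castRingHom R) :=
  Subsemiring.list_prod_mem _ <| by
    simp only [List.mem_map]
    rintro _ ⟨j, -, rfl⟩
    exact ⟨cyclotomic j ℤ, map_cyclotomic j _⟩

section TwoBranch

variable {R : Type*} [Semiring R]

noncomputable def twoBranchPoly (c : R) (a b : ℕ) : R[X] :=
  X ^ (a + b) + C c * X ^ a + C c * X ^ b + 1

theorem twoBranchPoly_coeff_left {c : R} {a b : ℕ} (ha : 0 < a) (hb : 0 < b) :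
    (twoBranchPoly c a b).coeff a = if a = b then 2 * c else c := by
  simp only [twoBranchPoly, coeff_add, coeff_C_mul, coeff_X_pow, coeff_one]
  split_ifs <;> first | omega | simp [two_mul]

theorem twoBranchPoly_self (c : R) (a : ℕ) :
    twoBranchPoly c a a = X ^ (a + a) + C (2 * c) * X ^ a + 1 := by
  rw [twoBranchPoly, two_mul, C_add, add_mul, ← add_assoc]

theorem map_twoBranchPoly {S : Type*} [Semiring S] (f : R →+* S) (c : R) (a b : ℕ) :
    (twoBranchPoly c a b).map f = twoBranchPoly (f c) a b := by
  simp [twoBranchPoly]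

end TwoBranch

theorem twoBranchPoly_mem_lifts_iff {R : Type*} [Ring R] {c : R} {a b : ℕ} (ha : 0 < a)
    (hb : 0 < b) : twoBranchPoly c a b ∈ lifts (Int.castRingHom R) ↔
      (a ≠ b ∧ ∃ m : ℤ, c = m) ∨ (a = b ∧ ∃ m : ℤ, 2 * c = m) := by
  constructor
  · intro h
    obtain ⟨m, hm⟩ := (mem_lifts_intCast_iff _).1 h a
    rw [twoBranchPoly_coeff_left ha hb] at hm
    by_cases hab : a = b
    · exact .inr ⟨hab, m, by simpa [hab] using hm⟩
    · exact .inl ⟨hab, m, by simpa [hab] using hm⟩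
  · rintro (⟨-, m, rfl⟩ | ⟨rfl, m, hm⟩)
    · exact ⟨twoBranchPoly (m : ℤ) a b, by simp [map_twoBranchPoly]⟩
    · refine ⟨X ^ (a + a) + C m * X ^ a + 1, ?_⟩
      simp [twoBranchPoly_self, hm]

section OrderedField

variable {K : Type*} [Field K] [LinearOrder K] [IsStrictOrderedRing K]

theorem one_sub_div_add_one_mem_Ioo {d : K} (hd : 1 < d) :
    (1 - d) / (d + 1) ∈ Set.Ioo (-1) 0 := by
  have hpos : 0 < d + 1 := by linarith
  constructor
  · rw [lt_div_iff₀ hpos]; linarith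
  · rw [div_lt_iff₀ hpos]; linarith

theorem not_exists_intCast_eq_of_mem_Ioo {x : K} (hx : x ∈ Set.Ioo (-1) 0) :
    ¬ ∃ m : ℤ, x = m := by
  rintro ⟨m, rfl⟩
  obtain ⟨hlo, hhi⟩ := hx
  have : (-1 : ℤ) < m ∧ m < 0 := ⟨by exact_mod_cast hlo, by exact_mod_cast hhi⟩
  omega

theorem exists_intCast_eq_two_mul_iff_of_mem_Ioo {x : K} (hx : x ∈ Set.Ioo (-1) 0) :
    (∃ m : ℤ, 2 * x = m) ↔ x = -1 / 2 := by
  constructor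
  · rintro ⟨m, hm⟩
    obtain ⟨hlo, hhi⟩ := hx
    have hlo' : (-2 : K) < m := by linarith
    have hhi' : (m : K) < 0 := by linarith
    have : (-2 : ℤ) < m ∧ m < 0 := ⟨by exact_mod_cast hlo', by exact_mod_cast hhi'⟩
    obtain rfl : m = -1 := by omega
    push_cast at hm
    linarith
  · rintro rfl
    exact ⟨-1, by norm_num⟩

end OrderedField

theorem one_sub_div_add_one_eq_neg_half_iff {K : Type*} [Field K] [NeZero (2 : K)] {d : K}
    (hd : d + 1 ≠ 0) : (1 - d) / (d + 1) = -1 / 2 ↔ d = 3 := by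
  rw [div_eq_div_iff hd two_ne_zero]
  constructor <;> intro h <;> linear_combination -h

theorem two_branching_integer_coeff_iff (k₁ k₂ : ℕ) (d : ℕ) (hk₁ : 1 ≤ k₁) (hk₂ : 1 ≤ k₂)
    (hd : 2 ≤ d) :
    ((∀ n : ℕ, ∃ m : ℤ,
        ((X : ℚ[X]) ^ (2 * (k₁ + k₂)) + C ((1 - (d : ℚ)) / ((d : ℚ) + 1)) * X ^ (2 * k₁)
          + C ((1 - (d : ℚ)) / ((d : ℚ) + 1)) * X ^ (2 * k₂) + 1).coeff n = (m : ℚ)) ↔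
      ((k₁ ≠ k₂ ∧ ∃ m : ℤ, (1 - (d : ℚ)) / ((d : ℚ) + 1) = (m : ℚ)) ∨
       (k₁ = k₂ ∧ ∃ m : ℤ, 2 * (1 - (d : ℚ)) / ((d : ℚ) + 1) = (m : ℚ)))) ∧
    ((∃ L : List ℕ,
        (X : ℚ[X]) ^ (2 * (k₁ + k₂)) + C ((1 - (d : ℚ)) / ((d : ℚ) + 1)) * X ^ (2 * k₁)
          + C ((1 - (d : ℚ)) / ((d : ℚ) + 1)) * X ^ (2 * k₂) + 1
          = (L.map fun j => Polynomial.cyclotomic j ℚ).prod) →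
      k₁ = k₂ ∧ d = 3) := by
  set c : ℚ := (1 - (d : ℚ)) / ((d : ℚ) + 1)
  have hQ : (X : ℚ[X]) ^ (2 * (k₁ + k₂)) + C c * X ^ (2 * k₁) + C c * X ^ (2 * k₂) + 1 =
      twoBranchPoly c (2 * k₁) (2 * k₂) := by
    rw [twoBranchPoly, mul_add]
  have hc : c ∈ Set.Ioo (-1) 0 := one_sub_div_add_one_mem_Ioo (by exact_mod_cast hd)
  have hlifts := twoBranchPoly_mem_lifts_iff (c := c) (a := 2 * k₁) (b := 2 * k₂)
    (by omega) (by omega)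
  simp only [ne_eq, mul_right_inj' two_ne_zero] at hlifts
  rw [hQ, mul_div_assoc, ← mem_lifts_intCast_iff, hlifts]
  refine ⟨Iff.rfl, ?_⟩
  rintro ⟨L, hL⟩
  rcases hlifts.1 (hL ▸ cyclotomic_list_prod_mem_lifts L) with ⟨-, hcint⟩ | ⟨hk, h2c⟩
  · exact absurd hcint (not_exists_intCast_eq_of_mem_Ioo hc)
  · rw [exists_intCast_eq_two_mul_iff_of_mem_Ioo hc,
      one_sub_div_add_one_eq_neg_half_iff (by positivity)] at h2c
    exact ⟨hk, by exact_mod_cast h2c⟩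
end

section
/- Let g_i be defined by g_0 = 1, g_1(λ) = λ, g_i(λ) = (d(n−i+1)+1)·λ·g_{i-1}(λ) − d(n−i+1)·g_{i-2}(λ) for i ∈ [2,n], and g_{n+1}(λ) = d(0)·(λ·g_n(λ) − g_{n-1}(λ)), with d(n) = 0 and d(i) ≥ 1 for i < n. Let p_i be defined by p_0 = 1, p_1(λ) = λ, and p_i(λ) = λ·p_{i-1}(λ) − D_{n−i+1}·p_{i-2}(λ), where D_i = d(i)/((d(i)+1)(d(i+1)+1)) for i ∈ [1,n−1] and D_0 = 1/(d(1)+1). Then p_i equals the monic normalization of g_i for all i ∈ [0, n+1]. -/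
/-!
The recurrences for `g` and `p` have the same shape, `g` merely carrying the extra factor
`a (i + 1)` in front of `X`, where `a j = d (n - j) + 1` for `j < n` and `a n = d 0`. Hence
`g i = c i • p i` with `c i = ∏ j < i, a j`: matching the constant terms amounts to
`D k = d k / ((d k + 1) (d (k + 1) + 1))` (and `D 0 = 1 / (d 1 + 1)` at the top), while
`d n = 0` makes `a 0 = 1`. Since the `p i` are monic, `c i` is the leading coefficient of `g i`.
-/

open Polynomial Finset

namespace Polynomial

variable {R : Type*} [CommRing R]

theorem monic_and_natDegree_eq_of_three_term_recurrence [Nontrivial R] {N : ℕ} {b : ℕ → R}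
    {p : ℕ → R[X]} (hp0 : p 0 = 1) (hp1 : p 1 = X)
    (hp : ∀ i, i + 2 ≤ N → p (i + 2) = X * p (i + 1) - C (b i) * p i) :
    ∀ i ≤ N, (p i).Monic ∧ (p i).natDegree = i := by
  intro i
  induction i using Nat.strong_induction_on with
  | _ i ih =>
    match i with
    | 0 => simp [hp0]
    | 1 => simp [hp1]
    | i + 2 =>
      intro hi
      obtain ⟨hmon₁, hdeg₁⟩ := ih (i + 1) (by omega) (by omega)
      obtain ⟨-, hdeg₀⟩ := ih i (by omega) (by omega)
      have hX : (X * p (i + 1)).natDegree = i + 2 := by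
        rw [natDegree_X_mul hmon₁.ne_zero, hdeg₁]
      have hlt : (C (b i) * p i).natDegree < (X * p (i + 1)).natDegree :=
        (natDegree_C_mul_le _ _).trans_lt (by omega)
      rw [hp i hi]
      exact ⟨(monic_X.mul hmon₁).sub_of_left (degree_lt_degree hlt),
        (natDegree_sub_eq_left_of_natDegree_lt hlt).trans hX⟩

theorem eq_C_prod_mul_of_three_term_recurrence {N : ℕ} {a β b : ℕ → R} {g p : ℕ → R[X]}
    (hg0 : g 0 = p 0) (hg1 : g 1 = C (a 0) * p 1)
    (hg : ∀ i, i + 2 ≤ N → g (i + 2) = C (a (i + 1)) * X * g (i + 1) - C (β i) * g i)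
    (hp : ∀ i, i + 2 ≤ N → p (i + 2) = X * p (i + 1) - C (b i) * p i)
    (hβ : ∀ i, i + 2 ≤ N → β i = a i * a (i + 1) * b i) :
    ∀ i ≤ N, g i = C (∏ j ∈ range i, a j) * p i := by
  intro i
  induction i using Nat.strong_induction_on with
  | _ i ih =>
    match i with
    | 0 => simp [hg0]
    | 1 => simp [hg1]
    | i + 2 =>
      intro hi
      rw [hg i hi, hp i hi, ih (i + 1) (by omega) (by omega), ih i (by omega) (by omega),
        hβ i hi]
      simp only [prod_range_succ, C_mul]
      ring

theorem Monic.eq_C_inv_leadingCoeff_mul_C_mul {K : Type*} [Field K] {p : K[X]} (hp : p.Monic)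
    {c : K} (hc : c ≠ 0) : p = C (C c * p).leadingCoeff⁻¹ * (C c * p) := by
  rw [leadingCoeff_mul, leadingCoeff_C, hp.leadingCoeff, mul_one, ← mul_assoc, ← C_mul,
    inv_mul_cancel₀ hc, C_1, one_mul]

end Polynomial

section BetheTree

variable (n : ℕ) (d : ℕ → ℕ)

/-- The ratio of the leading coefficients of `g (j + 1)` and `g j`. -/
noncomputable def betheLeadingRatio (j : ℕ) : ℝ :=
  if j = n then (d 0 : ℝ) else (d (n - j) : ℝ) + 1

/-- The coefficient of `g i` in the recurrence for `g (i + 2)`, including the top step. -/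
noncomputable def betheRecurrenceCoeff (i : ℕ) : ℝ :=
  if i + 1 = n then (d 0 : ℝ) else (d (n - (i + 1)) : ℝ)

variable {n d}

theorem betheLeadingRatio_ne_zero (hd0 : d 0 ≠ 0) (j : ℕ) :
    betheLeadingRatio n d j ≠ 0 := by
  unfold betheLeadingRatio
  split_ifs
  · exact_mod_cast hd0
  · positivity

theorem betheRecurrenceCoeff_eq (D : ℕ → ℝ) (hD0 : D 0 = 1 / ((d 1 : ℝ) + 1))
    (hDi : ∀ i, 1 ≤ i → i ≤ n - 1 →
      D i = (d i : ℝ) / (((d i : ℝ) + 1) * ((d (i + 1) : ℝ) + 1)))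
    {i : ℕ} (hi : i + 2 ≤ n + 1) :
    betheRecurrenceCoeff n d i =
      betheLeadingRatio n d i * betheLeadingRatio n d (i + 1) * D (n - (i + 1)) := by
  unfold betheRecurrenceCoeff betheLeadingRatio
  rw [if_neg (by omega : i ≠ n)]
  by_cases htop : i + 1 = n
  · rw [if_pos htop, if_pos htop, show n - (i + 1) = 0 by omega, show n - i = 1 by omega, hD0]
    field_simp
  · rw [if_neg htop, if_neg htop, hDi _ (by omega) (by omega),
      show n - i = n - (i + 1) + 1 by omega]
    field_simp

theorem bethe_g_recurrence (hn : 1 ≤ n) (g : ℕ → Polynomial ℝ)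
    (hgrec : ∀ i, 2 ≤ i → i ≤ n →
      g i = C ((d (n + 1 - i) : ℝ) + 1) * X * g (i - 1) - C (d (n + 1 - i) : ℝ) * g (i - 2))
    (hgtop : g (n + 1) = C (d 0 : ℝ) * (X * g n - g (n - 1))) {i : ℕ} (hi : i + 2 ≤ n + 1) :
    g (i + 2) = C (betheLeadingRatio n d (i + 1)) * X * g (i + 1) -
      C (betheRecurrenceCoeff n d i) * g i := by
  unfold betheLeadingRatio betheRecurrenceCoeff
  by_cases htop : i + 1 = n
  · subst htop
    rw [if_pos rfl, if_pos rfl, hgtop, Nat.add_sub_cancel]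
    ring
  · rw [if_neg htop, if_neg htop, hgrec (i + 2) (by omega) (by omega),
      show n + 1 - (i + 2) = n - (i + 1) by omega]
    rfl

end BetheTree

theorem p_eq_monic_normalization_of_g (n : ℕ) (hn : 1 ≤ n) (d : ℕ → ℕ)
    (hdn : d n = 0) (hd : ∀ i, i < n → 1 ≤ d i)
    (D : ℕ → ℝ)
    (hD0 : D 0 = 1 / ((d 1 : ℝ) + 1))
    (hDi : ∀ i, 1 ≤ i → i ≤ n - 1 →
      D i = (d i : ℝ) / (((d i : ℝ) + 1) * ((d (i + 1) : ℝ) + 1)))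
    (g : ℕ → Polynomial ℝ)
    (hg0 : g 0 = 1) (hg1 : g 1 = X)
    (hgrec : ∀ i, 2 ≤ i → i ≤ n →
      g i = C ((d (n + 1 - i) : ℝ) + 1) * X * g (i - 1) - C (d (n + 1 - i) : ℝ) * g (i - 2))
    (hgtop : g (n + 1) = C (d 0 : ℝ) * (X * g n - g (n - 1)))
    (p : ℕ → Polynomial ℝ)
    (hp0 : p 0 = 1) (hp1 : p 1 = X)
    (hprec : ∀ i, 2 ≤ i → i ≤ n + 1 →
      p i = X * p (i - 1) - C (D (n + 1 - i)) * p (i - 2)) :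
    ∀ i, i ≤ n + 1 → p i = C ((g i).leadingCoeff)⁻¹ * g i := by
  have hp : ∀ i, i + 2 ≤ n + 1 → p (i + 2) = X * p (i + 1) - C (D (n - (i + 1))) * p i := by
    intro i hi
    rw [hprec (i + 2) (by omega) hi, show n + 1 - (i + 2) = n - (i + 1) by omega]
    rfl
  have hg1' : g 1 = C (betheLeadingRatio n d 0) * p 1 := by
    rw [betheLeadingRatio, if_neg (by omega), Nat.sub_zero, hdn, hg1, hp1]
    simp
  have hgp := eq_C_prod_mul_of_three_term_recurrence (hg0.trans hp0.symm) hg1'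
    (fun i hi => bethe_g_recurrence hn g hgrec hgtop hi) hp
    (fun i hi => betheRecurrenceCoeff_eq D hD0 hDi hi)
  intro i hi
  rw [hgp i hi]
  have hmonic := (monic_and_natDegree_eq_of_three_term_recurrence hp0 hp1 hp i hi).1
  exact hmonic.eq_C_inv_leadingCoeff_mul_C_mul
    (prod_ne_zero_iff.2 fun j _ => betheLeadingRatio_ne_zero (Nat.one_le_iff_ne_zero.1 (hd 0 hn)) j)
end

section
/- Let f be a monic real polynomial of degree m. All real roots of f are real parts of roots of unity (i.e., of the form cos(2πq) with q ∈ ℚ) and f splits over ℝ with all roots in [−1,1], if (2z)^m · f((z+z⁻¹)/2), viewed as a polynomial in z, is a product of cyclotomic polynomials. -/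
/-!
Every `w ∈ ℂ` is a Zhukovskij image `(z + z⁻¹) / 2` of some `z ≠ 0`, since `z² - 2wz + 1` has a
root. If `w` is a root of `f`, the hypothesis makes `z` a root of a product of cyclotomic
polynomials, hence a root of unity `exp (2πiq)`, and then `w = cos (2πq)`. So every complex root
of `f` is real and lies in `[-1, 1]`, which gives all three conclusions.
-/

open Polynomial Complex

theorem exists_ne_zero_zhukovskij_eq {K : Type*} [Field K] [IsAlgClosed K] [NeZero (2 : K)]
    (w : K) : ∃ z : K, z ≠ 0 ∧ (z + z⁻¹) / 2 = w := by
  have hdeg : (X ^ 2 - C (2 * w) * X + 1 : K[X]).degree ≠ 0 := by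
    rw [show (X ^ 2 - C (2 * w) * X + 1 : K[X]).degree = 2 by compute_degree!]
    decide
  obtain ⟨z, hz⟩ := IsAlgClosed.exists_root _ hdeg
  have hquad : z ^ 2 - 2 * w * z + 1 = 0 := by simpa using hz
  have hz0 : z ≠ 0 := by
    rintro rfl
    simp at hquad
  refine ⟨z, hz0, ?_⟩
  field_simp
  linear_combination hquad

theorem zhukovskij_exp_mul_I (θ : ℂ) : (exp (θ * I) + (exp (θ * I))⁻¹) / 2 = cos θ := by
  rw [← exp_neg, ← neg_mul, Complex.cos]

theorem IsPrimitiveRoot.exists_rat_zhukovskij_eq_cos {z : ℂ} {n : ℕ} (hz : IsPrimitiveRoot z n)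
    (hn : n ≠ 0) : ∃ q : ℚ, (z + z⁻¹) / 2 = cos (2 * Real.pi * q) := by
  obtain ⟨i, -, -, rfl⟩ := (Complex.isPrimitiveRoot_iff z n hn).mp hz
  refine ⟨i / n, ?_⟩
  rw [← zhukovskij_exp_mul_I]
  push_cast
  ring_nf

theorem exists_isPrimitiveRoot_of_eval_prod_cyclotomic_eq_zero {R : Type*} [CommRing R]
    [IsDomain R] [CharZero R] {L : List ℕ} {z : R}
    (hz : (L.map fun j => cyclotomic j R).prod.eval z = 0) :
    ∃ n ≠ 0, IsPrimitiveRoot z n := by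
  rw [eval_list_prod, List.prod_eq_zero_iff, List.map_map] at hz
  obtain ⟨n, -, hn⟩ := List.mem_map.mp hz
  have hn0 : n ≠ 0 := by
    rintro rfl
    simp at hn
  exact ⟨n, hn0, (isRoot_cyclotomic_iff_charZero (Nat.pos_of_ne_zero hn0)).mp hn⟩

theorem exists_rat_eq_cos_of_aeval_eq_zero {R : Type*} [CommSemiring R] [Algebra R ℂ]
    {m : ℕ} {f : R[X]} {L : List ℕ}
    (hL : ∀ z : ℂ, z ≠ 0 →
      (2 * z) ^ m * aeval ((z + z⁻¹) / 2) f = (L.map fun j => cyclotomic j ℂ).prod.eval z)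
    {w : ℂ} (hw : aeval w f = 0) : ∃ q : ℚ, w = cos (2 * Real.pi * q) := by
  obtain ⟨z, hz0, rfl⟩ := exists_ne_zero_zhukovskij_eq w
  have hroot : (L.map fun j => cyclotomic j ℂ).prod.eval z = 0 := by
    rw [← hL z hz0, hw, mul_zero]
  obtain ⟨n, hn, hprim⟩ := exists_isPrimitiveRoot_of_eval_prod_cyclotomic_eq_zero hroot
  exact hprim.exists_rat_zhukovskij_eq_cos hn

theorem zhukovskij_roots_real_parts_of_roots_of_unity_general (m : ℕ) (f : Polynomial ℝ)
    (hcyc : ∃ g : Polynomial ℂ,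
      (∃ L : List ℕ, g = (L.map fun j => Polynomial.cyclotomic j ℂ).prod) ∧
      ∀ z : ℂ, z ≠ 0 → (2 * z) ^ m * (Polynomial.aeval ((z + z⁻¹) / 2)) f = g.eval z) :
    (∀ x : ℝ, f.IsRoot x → ∃ q : ℚ, x = Real.cos (2 * Real.pi * q)) ∧
    (f.map (RingHom.id ℝ)).Splits ∧
    ∀ x ∈ f.roots, -1 ≤ x ∧ x ≤ 1 := by
  obtain ⟨_, ⟨L, rfl⟩, hL⟩ := hcyc
  have hcos (w : ℂ) (hw : aeval w f = 0) : ∃ q : ℚ, w = (Real.cos (2 * Real.pi * q) : ℂ) := by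
    simpa only [ofReal_cos, ofReal_mul, ofReal_ofNat, ofReal_ratCast]
      using exists_rat_eq_cos_of_aeval_eq_zero hL hw
  have hreal (x : ℝ) (hx : f.IsRoot x) : ∃ q : ℚ, x = Real.cos (2 * Real.pi * q) := by
    obtain ⟨q, hq⟩ := hcos x (by simpa [hx.eq_zero] using (ofReal_eval (K := ℂ) f x).symm)
    exact ⟨q, ofReal_injective hq⟩
  refine ⟨hreal, ?_, fun x hx => ?_⟩
  · rw [map_id]
    refine (IsAlgClosed.splits _).of_splits_map (algebraMap ℝ ℂ) fun w hw => ?_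
    obtain ⟨q, hq⟩ := hcos w (mem_aroots'.mp hw).2
    exact ⟨_, hq.symm⟩
  · obtain ⟨q, rfl⟩ := hreal x (isRoot_of_mem_roots hx)
    exact ⟨Real.neg_one_le_cos _, Real.cos_le_one _⟩

theorem zhukovskij_roots_real_parts_of_roots_of_unity (m : ℕ) (f : Polynomial ℝ)
    (hmonic : f.Monic) (hdeg : f.natDegree = m)
    (hcyc : ∃ g : Polynomial ℂ,
      (∃ L : List ℕ, g = (L.map fun j => Polynomial.cyclotomic j ℂ).prod) ∧
      ∀ z : ℂ, z ≠ 0 → (2 * z) ^ m * (Polynomial.aeval ((z + z⁻¹) / 2)) f = g.eval z) :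
    (∀ x : ℝ, f.IsRoot x → ∃ q : ℚ, x = Real.cos (2 * Real.pi * q)) ∧
    (f.map (RingHom.id ℝ)).Splits ∧
    ∀ x ∈ f.roots, -1 ≤ x ∧ x ≤ 1 :=
  zhukovskij_roots_real_parts_of_roots_of_unity_general m f hcyc
end
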